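/- arXiv:1812.11451 — 3 statements merged into one kernel-verified Lean document; each statement's English description precedes it below -/
import Mathlib

section
/- Let N ≥ 3 and 2* = 2N/(N−2). Suppose g : ℝ → ℝ is continuous with g(0) = 0, let G(s) = ∫₀^s g(t) dt, and let G₊(s) = ∫₀^s max(g(t),0) dt for s ≥ 0 and G₊(s) = ∫_s^0 max(−g(t),0) dt for s < 0. Assume lim_{s→0} G₊(s)/|s|^{2*} = 0, lim_{|s|→∞} G₊(s)/|s|^{2*} = 0, and limsup_{|s|→∞} |g(s)|/|s|^{2*−1} < ∞. Then there exists a constant C > 0 such that for every smooth compactly supported function u : ℝ^N → ℝ one has (∫_{ℝ^N} |∇u|² dx)^{N/(N−2)} ≥ C ∫_{ℝ^N} G(u(x)) dx. -/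
open MeasureTheory Filter Topology
open scoped NNReal ENNReal

/-- General class of optimal Sobolev inequalities (inequality (1.1) of the paper):
under assumptions (g0)-(g3) there is a constant `C > 0` such that
`(∫ |∇u|²)^(N/(N-2)) ≥ C ∫ G(u)` for all smooth compactly supported `u`. -/
theorem sobolev_inequality_general_nonlinearity
    (N : ℕ) (hN : 3 ≤ N)
    (g G Gplus : ℝ → ℝ)
    (hg_cont : Continuous g) (hg_zero : g 0 = 0)
    (hG : ∀ s : ℝ, G s = ∫ t in (0:ℝ)..s, g t)
    (hGplus_nonneg : ∀ s : ℝ, 0 ≤ s → Gplus s = ∫ t in (0:ℝ)..s, max (g t) 0)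
    (hGplus_neg : ∀ s : ℝ, s < 0 → Gplus s = ∫ t in s..(0:ℝ), max (-g t) 0)
    -- (g1): lim_{s → 0} G₊(s)/|s|^{2*} = 0
    (hg1 : Tendsto (fun s : ℝ => Gplus s / |s| ^ ((2 * N : ℝ) / (N - 2)))
      (𝓝[≠] 0) (𝓝 0))
    -- (g3), first part: lim_{|s| → ∞} G₊(s)/|s|^{2*} = 0
    (hg3 : Tendsto (fun s : ℝ => Gplus s / |s| ^ ((2 * N : ℝ) / (N - 2)))
      (cocompact ℝ) (𝓝 0))
    -- (g3), second part: limsup_{|s| → ∞} |g(s)|/|s|^{2*-1} < ∞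
    (hg3' : ∃ A : ℝ, ∀ᶠ s : ℝ in cocompact ℝ,
      |g s| / |s| ^ ((2 * N : ℝ) / (N - 2) - 1) ≤ A) :
    ∃ C : ℝ, 0 < C ∧ ∀ u : EuclideanSpace ℝ (Fin N) → ℝ,
      ContDiff ℝ (⊤ : ℕ∞) u → HasCompactSupport u →
      (∫ x, ‖gradient u x‖ ^ 2) ^ ((N : ℝ) / (N - 2)) ≥ C * ∫ x, G (u x) := by
  classical
  have hN2 : (0:ℝ) < (N:ℝ) - 2 := by
    have : (3:ℝ) ≤ N := by exact_mod_cast hN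
    linarith
  set q : ℝ := (2 * N : ℝ) / ((N:ℝ) - 2) with hqdef
  have hq0 : 0 < q := by positivity
  ------------------------------------------------------------------
  -- Step A : pointwise bound `G s ≤ K * |s| ^ q` with `K ≥ 1`.
  ------------------------------------------------------------------
  have hGle : ∀ s, G s ≤ Gplus s := by
    intro s
    rcases le_or_gt 0 s with hs | hs
    · rw [hG s, hGplus_nonneg s hs]
      exact intervalIntegral.integral_mono_on hs
        (hg_cont.intervalIntegrable _ _)
        ((hg_cont.max continuous_const).intervalIntegrable _ _)
        (fun t _ => le_max_left _ _)
    · rw [hG s, hGplus_neg s hs, intervalIntegral.integral_symm,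
        ← intervalIntegral.integral_neg]
      exact intervalIntegral.integral_mono_on hs.le
        ((hg_cont.neg).intervalIntegrable _ _)
        (((hg_cont.neg).max continuous_const).intervalIntegrable _ _)
        (fun t _ => le_max_left _ _)
  obtain ⟨K, hK1, hGK⟩ :
      ∃ K : ℝ, 1 ≤ K ∧ ∀ s : ℝ, G s ≤ K * |s| ^ q := by
    have h1 : ∀ᶠ s in 𝓝[≠] (0:ℝ), Gplus s / |s| ^ q < 1 := hg1.eventually_lt_const one_pos
    rw [eventually_nhdsWithin_iff] at h1
    obtain ⟨δ, hδ0, hδ⟩ := Metric.eventually_nhds_iff.mp h1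
    rw [cocompact_eq_atBot_atTop] at hg3
    obtain ⟨hbot, htop⟩ := tendsto_sup.mp hg3
    obtain ⟨a, hA⟩ := eventually_atTop.mp (htop.eventually_lt_const one_pos)
    obtain ⟨b, hB⟩ := eventually_atBot.mp (hbot.eventually_lt_const one_pos)
    set R : ℝ := max a (max (-b) δ) with hRdef
    have hRδ : δ ≤ R := le_max_of_le_right (le_max_right _ _)
    have hRa : a ≤ R := le_max_left _ _
    have hRb : -R ≤ b := by
      have : -b ≤ R := le_max_of_le_right (le_max_left _ _)
      linarith
    have hcont1 : Continuous (fun s => ∫ t in (0:ℝ)..s, max (g t) 0) :=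
      intervalIntegral.continuous_primitive (μ := volume)
        (fun a b => (hg_cont.max continuous_const).intervalIntegrable a b) 0
    have hcont2 : Continuous (fun s => ∫ t in s..(0:ℝ), max (-g t) 0) := by
      have h := intervalIntegral.continuous_primitive (μ := volume)
        (f := fun t => max (-g t) 0)
        (fun a b => ((hg_cont.neg).max continuous_const).intervalIntegrable a b) 0
      have heq : (fun s => ∫ t in s..(0:ℝ), max (-g t) 0)
          = fun s => -∫ t in (0:ℝ)..s, max (-g t) 0 := by
        funext s
        rw [intervalIntegral.integral_symm]
      rw [heq]
      exact h.neg
    obtain ⟨K₁, hK₁⟩ := (isCompact_Icc (a := δ) (b := R)).exists_bound_of_continuousOn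
      hcont1.continuousOn
    obtain ⟨K₂, hK₂⟩ := (isCompact_Icc (a := -R) (b := -δ)).exists_bound_of_continuousOn
      hcont2.continuousOn
    set Km : ℝ := max (max K₁ K₂) 0 with hKm
    have hδq : (0:ℝ) < δ ^ q := Real.rpow_pos_of_pos hδ0 q
    set K : ℝ := max 1 (Km / δ ^ q) with hKdef
    have hK1 : 1 ≤ K := le_max_left _ _
    refine ⟨K, hK1, fun s => ?_⟩
    refine (hGle s).trans ?_
    rcases eq_or_ne s 0 with rfl | hs
    · rw [hGplus_nonneg 0 le_rfl, intervalIntegral.integral_same]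
      rw [abs_zero, Real.zero_rpow hq0.ne']
      simp
    have habs : 0 < |s| := abs_pos.mpr hs
    have hsq : 0 < |s| ^ q := Real.rpow_pos_of_pos habs q
    have small_case : Gplus s / |s| ^ q < 1 → Gplus s ≤ K * |s| ^ q := by
      intro hlt
      calc Gplus s ≤ |s| ^ q := ((div_lt_one hsq).mp hlt).le
        _ ≤ K * |s| ^ q := le_mul_of_one_le_left hsq.le hK1
    rcases lt_or_ge |s| δ with hlt | hge
    · exact small_case (hδ (by simpa [Real.dist_eq] using hlt) hs)
    rcases lt_or_ge R |s| with hbig | hmid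
    · rcases lt_abs.mp hbig with h | h
      · exact small_case (hA s (le_of_lt (lt_of_le_of_lt hRa h)))
      · have : s ≤ b := by linarith
        exact small_case (hB s this)
    have key : Gplus s ≤ Km := by
      rcases le_or_gt 0 s with hs0 | hs0
      · have hmem : s ∈ Set.Icc δ R := by
          rw [abs_of_nonneg hs0] at hge hmid
          exact ⟨hge, hmid⟩
        rw [hGplus_nonneg s hs0]
        calc (∫ t in (0:ℝ)..s, max (g t) 0) ≤ |∫ t in (0:ℝ)..s, max (g t) 0| :=
              le_abs_self _
          _ = ‖∫ t in (0:ℝ)..s, max (g t) 0‖ := (Real.norm_eq_abs _).symm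
          _ ≤ K₁ := hK₁ s hmem
          _ ≤ Km := le_max_of_le_left (le_max_left _ _)
      · have hmem : s ∈ Set.Icc (-R) (-δ) := by
          rw [abs_of_neg hs0] at hge hmid
          constructor <;> linarith
        rw [hGplus_neg s hs0]
        calc (∫ t in s..(0:ℝ), max (-g t) 0) ≤ |∫ t in s..(0:ℝ), max (-g t) 0| :=
              le_abs_self _
          _ = ‖∫ t in s..(0:ℝ), max (-g t) 0‖ := (Real.norm_eq_abs _).symm
          _ ≤ K₂ := hK₂ s hmem
          _ ≤ Km := le_max_of_le_left (le_max_right _ _)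
    have hδs : δ ^ q ≤ |s| ^ q := Real.rpow_le_rpow hδ0.le hge hq0.le
    calc Gplus s ≤ Km := key
      _ = (Km / δ ^ q) * δ ^ q := by field_simp
      _ ≤ (Km / δ ^ q) * |s| ^ q := by
          apply mul_le_mul_of_nonneg_left hδs
          have hKm0 : 0 ≤ Km := le_max_right _ _
          positivity
      _ ≤ K * |s| ^ q := mul_le_mul_of_nonneg_right (le_max_right _ _) hsq.le
  ------------------------------------------------------------------
  -- Step B : Sobolev constant
  ------------------------------------------------------------------
  set p' : ℝ≥0 := ⟨q, hq0.le⟩ with hp'def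
  have hp'0 : p' ≠ 0 := fun h => hq0.ne' (congrArg NNReal.toReal h)
  have hn : 0 < Module.finrank ℝ (EuclideanSpace ℝ (Fin N)) := by
    simp only [finrank_euclideanSpace, Fintype.card_fin]; omega
  have hp' : (p' : ℝ)⁻¹ =
      ((2:ℝ≥0) : ℝ)⁻¹ - (Module.finrank ℝ (EuclideanSpace ℝ (Fin N)) : ℝ)⁻¹ := by
    rw [show Module.finrank ℝ (EuclideanSpace ℝ (Fin N)) = N by
      simp only [finrank_euclideanSpace, Fintype.card_fin]]
    show q⁻¹ = (2:ℝ)⁻¹ - (N:ℝ)⁻¹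
    have hNpos : (0:ℝ) < N := by linarith
    rw [hqdef]; field_simp
  set C' : ℝ≥0 := SNormLESNormFDerivOfEqConst (E := EuclideanSpace ℝ (Fin N)) ℝ volume 2
    with hC'
  set D : ℝ := K * (C' : ℝ) ^ q with hD
  set B : ℝ := max D 1 with hBdef
  have hB1 : (1:ℝ) ≤ B := le_max_right _ _
  have hB0 : (0:ℝ) < B := lt_of_lt_of_le one_pos hB1
  refine ⟨B⁻¹, inv_pos.mpr hB0, fun u hu h2u => ?_⟩
  have hu1 : ContDiff ℝ 1 u := hu.of_le (by simp)
  ------------------------------------------------------------------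
  -- Step C : the Sobolev inequality for this `u`.
  ------------------------------------------------------------------
  have hsob := eLpNorm_le_eLpNorm_fderiv_of_eq (F := ℝ)
    (volume : Measure (EuclideanSpace ℝ (Fin N))) hu1 h2u (p := 2) (p' := p') one_le_two hn hp'
  rw [show (((2:ℝ≥0)):ℝ≥0∞) = (2:ℝ≥0∞) from by norm_cast,
    show (((2:ℝ≥0)):ℝ) = (2:ℝ) from by norm_num] at hsob
  have hduc : Continuous (fderiv ℝ u) := hu1.continuous_fderiv one_ne_zero
  have hcs2 : HasCompactSupport (fun x => ‖fderiv ℝ u x‖ ^ 2) :=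
    (h2u.fderiv (𝕜 := ℝ)).comp_left
      (g := fun v : EuclideanSpace ℝ (Fin N) →L[ℝ] ℝ => ‖v‖ ^ 2) (by simp)
  have hI2 : Integrable (fun x => ‖fderiv ℝ u x‖ ^ 2) :=
    ((hduc.norm).pow 2).integrable_of_hasCompactSupport hcs2
  have hcsq : HasCompactSupport (fun x => |u x| ^ q) :=
    h2u.comp_left (g := fun t : ℝ => |t| ^ q) (by simp [Real.zero_rpow hq0.ne'])
  have hIq : Integrable (fun x => |u x| ^ q) :=
    ((hu1.continuous.abs).rpow_const (fun x => Or.inr hq0.le)).integrable_of_hasCompactSupport hcsq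
  set L₁ : ℝ≥0∞ := ∫⁻ x, (‖u x‖₊ : ℝ≥0∞) ^ q with hL₁
  set L₂ : ℝ≥0∞ := ∫⁻ x, (‖fderiv ℝ u x‖₊ : ℝ≥0∞) ^ (2:ℝ) with hL₂
  have eq1 : ENNReal.ofReal (∫ x, |u x| ^ q) = L₁ := by
    rw [ofReal_integral_eq_lintegral_ofReal hIq
      (ae_of_all _ fun x => Real.rpow_nonneg (abs_nonneg _) _)]
    refine lintegral_congr fun x => ?_
    rw [← Real.norm_eq_abs, ← enorm_eq_nnnorm, ← ofReal_norm,
      ← ENNReal.ofReal_rpow_of_nonneg (norm_nonneg _) hq0.le]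
  have eq2 : ENNReal.ofReal (∫ x, ‖fderiv ℝ u x‖ ^ 2) = L₂ := by
    rw [ofReal_integral_eq_lintegral_ofReal hI2 (ae_of_all _ fun x => by positivity)]
    refine lintegral_congr fun x => ?_
    rw [← enorm_eq_nnnorm, ← ofReal_norm, show ((2:ℝ)) = ((2:ℕ):ℝ) by norm_num,
      ENNReal.rpow_natCast, ENNReal.ofReal_pow (norm_nonneg _)]
  have hA : eLpNorm u p' volume ^ q = L₁ :=
    eLpNorm_nnreal_pow_eq_lintegral hp'0
  have hB2 : eLpNorm (fderiv ℝ u) 2 volume ^ (2:ℝ) = L₂ := by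
    have h := eLpNorm_nnreal_pow_eq_lintegral
      (μ := (volume : Measure (EuclideanSpace ℝ (Fin N)))) (f := fderiv ℝ u)
      (p := (2:ℝ≥0)) (by norm_num)
    rw [show (((2:ℝ≥0)):ℝ≥0∞) = (2:ℝ≥0∞) from by norm_cast,
      show (((2:ℝ≥0)):ℝ) = (2:ℝ) from by norm_num] at h
    rw [hL₂]
    exact h
  have h3 : L₁ ≤ (C' : ℝ≥0∞) ^ q * L₂ ^ (q / 2) := by
    have h := ENNReal.rpow_le_rpow hsob hq0.le
    rw [ENNReal.mul_rpow_of_nonneg _ _ hq0.le, hA] at h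
    refine h.trans (le_of_eq ?_)
    congr 1
    rw [← hB2, ← ENNReal.rpow_mul, show (2:ℝ) * (q/2) = q by ring]
  have hX0 : 0 ≤ ∫ x, ‖fderiv ℝ u x‖ ^ 2 := integral_nonneg fun x => by positivity
  have key : ENNReal.ofReal (∫ x, |u x| ^ q) ≤
      ENNReal.ofReal ((C' : ℝ) ^ q * (∫ x, ‖fderiv ℝ u x‖ ^ 2) ^ (q/2)) := by
    rw [eq1, ENNReal.ofReal_mul (by positivity),
      ← ENNReal.ofReal_rpow_of_nonneg hX0 (by positivity), eq2]
    refine h3.trans (le_of_eq ?_)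
    congr 1
    rw [← ENNReal.ofReal_rpow_of_nonneg NNReal.zero_le_coe hq0.le, ENNReal.ofReal_coe_nnreal]
  have sob_real : (∫ x, |u x| ^ q) ≤
      (C' : ℝ) ^ q * (∫ x, ‖fderiv ℝ u x‖ ^ 2) ^ (q/2) :=
    (ENNReal.ofReal_le_ofReal_iff (by positivity)).mp key
  ------------------------------------------------------------------
  -- Step D : put everything together.
  ------------------------------------------------------------------
  have hGc : Continuous G := by
    rw [show G = fun s => ∫ t in (0:ℝ)..s, g t from funext hG]
    exact intervalIntegral.continuous_primitive (μ := volume)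
      (fun a b => hg_cont.intervalIntegrable a b) 0
  have hG0 : G 0 = 0 := by rw [hG 0, intervalIntegral.integral_same]
  have hIG : Integrable (fun x => G (u x)) :=
    (hGc.comp hu1.continuous).integrable_of_hasCompactSupport
      (h2u.comp_left (g := G) hG0)
  have step1 : (∫ x, G (u x)) ≤ K * ∫ x, |u x| ^ q := by
    rw [← integral_const_mul]
    exact integral_mono hIG (hIq.const_mul K) (fun x => hGK (u x))
  have hgradeq : (∫ x, ‖gradient u x‖ ^ 2) = ∫ x, ‖fderiv ℝ u x‖ ^ 2 := by
    refine integral_congr_ae (ae_of_all _ fun x => ?_)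
    simp [gradient]
  have hq2 : q / 2 = (N:ℝ) / ((N:ℝ) - 2) := by rw [hqdef]; ring
  set X : ℝ := ∫ x, ‖fderiv ℝ u x‖ ^ 2 with hXdef
  set Y : ℝ := X ^ (q / 2) with hYdef
  have hY0 : 0 ≤ Y := Real.rpow_nonneg hX0 _
  have main : (∫ x, G (u x)) ≤ D * Y := by
    calc (∫ x, G (u x)) ≤ K * ∫ x, |u x| ^ q := step1
      _ ≤ K * ((C' : ℝ) ^ q * Y) := by
          apply mul_le_mul_of_nonneg_left sob_real (by linarith)
      _ = D * Y := by rw [hD]; ring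
  have goal_eq : (∫ x, ‖gradient u x‖ ^ 2) ^ ((N : ℝ) / ((N:ℝ) - 2)) = Y := by
    rw [hgradeq, hYdef, hq2]
  rw [ge_iff_le, goal_eq]
  calc B⁻¹ * ∫ x, G (u x) ≤ B⁻¹ * (D * Y) := by
        apply mul_le_mul_of_nonneg_left main (by positivity)
    _ = (B⁻¹ * D) * Y := by ring
    _ ≤ 1 * Y := by
        apply mul_le_mul_of_nonneg_right _ hY0
        have hDB : D ≤ B := le_max_left _ _
        calc B⁻¹ * D ≤ B⁻¹ * B := mul_le_mul_of_nonneg_left hDB (by positivity)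
          _ = 1 := inv_mul_cancel₀ hB0.ne'
    _ = Y := one_mul Y
end

section
/- Let N ≥ 3 and set C := (2N/(N−2)) · (N/2)^{2/(N−2)} · e^{2(N−1)/(N−2)} · π^{N/(N−2)}. For every λ > 0, the function u_λ(x) = exp((N−1)/2 − λ²‖x‖²/2) on ℝ^N satisfies the equality (∫_{ℝ^N} |∇u_λ(x)|² dx)^{N/(N−2)} = C · ∫_{ℝ^N} u_λ(x)² log(u_λ(x)) dx. -/
/-!
For `u = exp (c - a‖x‖²/2)` both `|∇u|²` and `u² log u` are combinations of `exp (-a‖x‖²)` and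
`‖x‖² exp (-a‖x‖²)`. In polar coordinates the second moment of a Gaussian is a Gamma-function
ratio times the zeroth one, `∫ ‖x‖² e^{-a‖x‖²} = N/(2a) ∫ e^{-a‖x‖²}`, so both integrals are
explicit multiples of `e^{2c} (π/a)^{N/2}`. For `c = (N-1)/2` what remains is an identity between
powers of `N`, `a`, `e` and `π`, which is exactly what the sharp constant `C` balances.
-/

open MeasureTheory Filter Real Set Metric

section GaussianMoments

variable {E : Type*} [NormedAddCommGroup E] [NormedSpace ℝ E] [FiniteDimensional ℝ E]
  [MeasurableSpace E] [BorelSpace E] [Nontrivial E] (μ : Measure E) [μ.IsAddHaarMeasure]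
  {b : ℝ}

private lemma pow_smul_pow_mul_exp_neg_mul_sq (d k : ℕ) (y : ℝ) :
    y ^ (d - 1) • (y ^ k * exp (-b * y ^ 2))
      = y ^ ((d - 1 + k : ℕ) : ℝ) * exp (-b * y ^ (2 : ℝ)) := by
  rw [smul_eq_mul, ← mul_assoc, ← pow_add, rpow_natCast, rpow_two]

theorem integrable_pow_norm_mul_exp_neg_mul_sq_norm (hb : 0 < b) (k : ℕ) :
    Integrable (fun x : E => ‖x‖ ^ k * exp (-b * ‖x‖ ^ 2)) μ := by
  rw [integrable_fun_norm_addHaar μ (f := fun y => y ^ k * exp (-b * y ^ 2))]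
  exact (integrableOn_rpow_mul_exp_neg_mul_rpow (neg_one_lt_zero.trans_le (Nat.cast_nonneg _))
    two_pos hb).congr_fun (fun y _ => (pow_smul_pow_mul_exp_neg_mul_sq _ k y).symm)
    measurableSet_Ioi

theorem integral_pow_norm_mul_exp_neg_mul_sq_norm (hb : 0 < b) (k : ℕ) :
    ∫ x, ‖x‖ ^ k * exp (-b * ‖x‖ ^ 2) ∂μ
      = Module.finrank ℝ E * μ.real (ball 0 1)
        * (b ^ (-(k + Module.finrank ℝ E : ℝ) / 2) / 2 * Gamma ((k + Module.finrank ℝ E) / 2)) := by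
  have hd : 0 < Module.finrank ℝ E := Module.finrank_pos
  rw [integral_fun_norm_addHaar μ (fun y => y ^ k * exp (-b * y ^ 2)),
    setIntegral_congr_fun measurableSet_Ioi (fun y _ => pow_smul_pow_mul_exp_neg_mul_sq _ k y),
    integral_rpow_mul_exp_neg_mul_rpow two_pos (neg_one_lt_zero.trans_le (Nat.cast_nonneg _)) hb,
    nsmul_eq_mul, smul_eq_mul]
  have hexp : ((Module.finrank ℝ E - 1 + k : ℕ) : ℝ) + 1 = k + Module.finrank ℝ E := by
    rw [Nat.cast_add, Nat.cast_sub hd]; push_cast; ring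
  rw [hexp]
  ring

theorem integral_sq_norm_mul_exp_neg_mul_sq_norm (hb : 0 < b) :
    ∫ x, ‖x‖ ^ 2 * exp (-b * ‖x‖ ^ 2) ∂μ
      = Module.finrank ℝ E / (2 * b) * ∫ x, exp (-b * ‖x‖ ^ 2) ∂μ := by
  have h0 := integral_pow_norm_mul_exp_neg_mul_sq_norm μ hb 0
  simp only [pow_zero, one_mul, Nat.cast_zero, zero_add] at h0
  rw [integral_pow_norm_mul_exp_neg_mul_sq_norm μ hb 2, h0]
  have hd : (Module.finrank ℝ E : ℝ) ≠ 0 := by exact_mod_cast Module.finrank_pos.ne'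
  set d : ℝ := (Module.finrank ℝ E : ℝ)
  rw [show ((2 : ℕ) + d) / 2 = d / 2 + 1 by push_cast; ring, Gamma_add_one (by simpa using hd),
    show -((2 : ℕ) + d) / 2 = -d / 2 + -1 by push_cast; ring, rpow_add hb, rpow_neg_one]
  field_simp

end GaussianMoments

section Gausson

variable {E : Type*} [NormedAddCommGroup E]

noncomputable def gausson (c a : ℝ) (x : E) : ℝ := exp (c - a * ‖x‖ ^ 2 / 2)

theorem gausson_sq (c a : ℝ) (x : E) :
    gausson c a x ^ 2 = exp (2 * c) * exp (-a * ‖x‖ ^ 2) := by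
  rw [gausson, ← exp_nat_mul, ← exp_add]; ring_nf

theorem gausson_sq_mul_log (c a : ℝ) (x : E) :
    gausson c a x ^ 2 * log (gausson c a x)
      = exp (2 * c) * (c * exp (-a * ‖x‖ ^ 2) - a / 2 * (‖x‖ ^ 2 * exp (-a * ‖x‖ ^ 2))) := by
  rw [gausson_sq, gausson, log_exp]; ring

theorem hasGradientAt_gausson [InnerProductSpace ℝ E] [CompleteSpace E] (c a : ℝ) (x : E) :
    HasGradientAt (gausson c a) ((-a * gausson c a x) • x) x := by
  have h := (((hasFDerivAt_id x).norm_sq.const_mul (a / 2)).const_sub c).exp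
  rw [hasGradientAt_iff_hasFDerivAt]
  refine (h.congr_of_eventuallyEq (Eventually.of_forall fun y => ?_)).congr_fderiv ?_
  · simp only [gausson, id]; ring_nf
  · ext v
    simp only [id_eq, ContinuousLinearMap.comp_id, smul_apply, neg_apply, coe_innerSL_apply,
      InnerProductSpace.toDual_apply_apply, real_inner_smul_left, smul_eq_mul, nsmul_eq_mul, gausson, mul_div_right_comm a]
    ring

theorem norm_gradient_gausson_sq [InnerProductSpace ℝ E] [CompleteSpace E] (c a : ℝ) (x : E) :
    ‖gradient (gausson c a) x‖ ^ 2 = exp (2 * c) * a ^ 2 * (‖x‖ ^ 2 * exp (-a * ‖x‖ ^ 2)) := by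
  rw [(hasGradientAt_gausson c a x).gradient, norm_smul, mul_pow, Real.norm_eq_abs, sq_abs,
    mul_pow, gausson_sq]
  ring

variable [MeasurableSpace E] [BorelSpace E] [Nontrivial E] (μ : Measure E) {a : ℝ}

theorem integral_gausson_sq_mul_log [NormedSpace ℝ E] [FiniteDimensional ℝ E]
    [μ.IsAddHaarMeasure] (c : ℝ) (ha : 0 < a) :
    ∫ x, gausson c a x ^ 2 * log (gausson c a x) ∂μ
      = exp (2 * c) * (c - Module.finrank ℝ E / 4) * ∫ x, exp (-a * ‖x‖ ^ 2) ∂μ := by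
  simp_rw [gausson_sq_mul_log]
  rw [integral_const_mul, integral_sub, integral_const_mul, integral_const_mul,
    integral_sq_norm_mul_exp_neg_mul_sq_norm μ ha]
  · field_simp; ring
  · simpa using (integrable_pow_norm_mul_exp_neg_mul_sq_norm μ ha 0).const_mul c
  · exact (integrable_pow_norm_mul_exp_neg_mul_sq_norm μ ha 2).const_mul _

theorem integral_norm_gradient_gausson_sq [InnerProductSpace ℝ E] [FiniteDimensional ℝ E]
    [μ.IsAddHaarMeasure] (c : ℝ) (ha : 0 < a) :
    ∫ x, ‖gradient (gausson c a) x‖ ^ 2 ∂μ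
      = exp (2 * c) * (a * Module.finrank ℝ E / 2) * ∫ x, exp (-a * ‖x‖ ^ 2) ∂μ := by
  simp_rw [norm_gradient_gausson_sq, integral_const_mul,
    integral_sq_norm_mul_exp_neg_mul_sq_norm μ ha]
  field_simp

end Gausson

theorem gausson_constant_identity {N a : ℝ} (hN : 2 < N) (ha : 0 < a) :
    (exp (N - 1) * (a * N / 2) * (π / a) ^ (N / 2)) ^ (N / (N - 2))
      = ((2 * N) / (N - 2) * (N / 2) ^ (2 / (N - 2)) * exp (2 * (N - 1) / (N - 2))
          * π ^ (N / (N - 2))) * (exp (N - 1) * ((N - 1) / 2 - N / 4) * (π / a) ^ (N / 2)) := by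
  have hq : N - 2 ≠ 0 := by linarith
  set p := N / (N - 2)
  have hp : p = 1 + 2 / (N - 2) := by simp only [p]; field_simp; ring
  have hNp : N / 2 * p = N / 2 + p := by rw [hp]; field_simp; ring
  have hexp : (N - 1) * p = (N - 1) + 2 * (N - 1) / (N - 2) := by rw [hp]; field_simp
  have hN2 : (N / 2) ^ p = N / 2 * (N / 2) ^ (2 / (N - 2)) := by
    rw [hp, rpow_add (by positivity), rpow_one]
  rw [mul_rpow (by positivity) (by positivity), mul_rpow (by positivity) (by positivity),
    ← exp_mul, hexp, exp_add, ← rpow_mul (by positivity), hNp, rpow_add (by positivity),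
    div_rpow pi_pos.le ha.le p, mul_div_assoc a, mul_rpow ha.le (by positivity), hN2]
  have : a ^ p ≠ 0 := (rpow_pos_of_pos ha p).ne'
  field_simp
  ring

/-- Equality case of the optimal Sobolev-type inequality for the logarithmic
nonlinearity `G(s) = s² log|s|`: with the sharp constant
`C = (2N/(N-2)) (N/2)^{2/(N-2)} e^{2(N-1)/(N-2)} π^{N/(N-2)}`, every Gausson
`u_λ(x) = exp((N-1)/2 - λ²‖x‖²/2)` satisfies
`(∫ |∇u_λ|²)^{N/(N-2)} = C ∫ u_λ² log u_λ`. -/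
theorem gausson_equality_in_optimal_inequality
    (N : ℕ) (hN : 3 ≤ N)
    (C : ℝ)
    (hC : C = ((2 * N : ℝ) / (N - 2)) * ((N : ℝ) / 2) ^ ((2 : ℝ) / (N - 2))
        * Real.exp (2 * ((N : ℝ) - 1) / (N - 2)) * Real.pi ^ ((N : ℝ) / (N - 2)))
    (lam : ℝ) (hlam : 0 < lam)
    (u : EuclideanSpace ℝ (Fin N) → ℝ)
    (hu : ∀ x, u x = Real.exp (((N : ℝ) - 1) / 2 - lam ^ 2 * ‖x‖ ^ 2 / 2)) :
    (∫ x, ‖gradient u x‖ ^ 2) ^ ((N : ℝ) / (N - 2))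
      = C * ∫ x, (u x) ^ 2 * Real.log (u x) := by
  have ha : 0 < lam ^ 2 := by positivity
  have : NeZero N := ⟨by omega⟩
  obtain rfl : u = gausson (((N : ℝ) - 1) / 2) (lam ^ 2) := funext hu
  rw [integral_norm_gradient_gausson_sq volume _ ha, integral_gausson_sq_mul_log volume _ ha,
    GaussianFourier.integral_rexp_neg_mul_sq_norm ha, finrank_euclideanSpace_fin, hC,
    show 2 * (((N : ℝ) - 1) / 2) = N - 1 by ring]
  exact gausson_constant_identity (by exact_mod_cast hN) ha
end

section
/- Let N ≥ 3, 2* = 2N/(N−2), and let p satisfy 2 < p < 2*. Define m₀ := ((N−2)(2*−p)/(N(p−2))) · (N(p−2)/(2p))^{(2*−2)/(2*−p)} and, for m ∈ ℝ, define G : ℝ → ℝ by G(s) = |s|^p/p − |s|^{2*}/2* − m s²/2. Then there exists ξ₀ > 0 with G(ξ₀) > 0 if and only if m < m₀. In particular, if m ≥ m₀ then G(s) ≤ 0 for every s ∈ ℝ. -/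
/-!
One has `G(s) = s²/2 · (φ(|s|) - m)` with `φ(t) = (2/p) t^(p-2) - (2/2*) t^(2*-2)`,
so everything hinges on `sup_{t>0} φ = m₀`, attained. For `0 < a < b` the maximum of
`u tᵃ - v tᵇ` sits at the critical point `t₀` with `t₀^(b-a) = a u / (b v)`; rescaling `t`
by `t₀` reduces the bound to Bernoulli's inequality `r y - yʳ ≤ r - 1` (`r = b/a ≥ 1`). Since
`N = 2·2*/(2*-2)`, the maximum value for `a = p-2`, `b = 2*-2` is exactly `m₀`.
-/

lemma mul_sub_rpow_le_sub_one {r y : ℝ} (hr : 1 ≤ r) (hy : 0 ≤ y) :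
    r * y - y ^ r ≤ r - 1 := by
  have h := one_add_mul_self_le_rpow_one_add (s := y - 1) (by linarith) hr
  rw [add_sub_cancel] at h
  linarith

section TwoPowers

variable {a b u v : ℝ}

lemma mul_rpow_sub_mul_rpow_eq_rescaled (ha : 0 < a) (hb : 0 < b) (hv : 0 < v) {t t₀ : ℝ}
    (ht : 0 ≤ t) (ht₀ : 0 < t₀) (hcrit : t₀ ^ (b - a) = a * u / (b * v)) :
    u * t ^ a - v * t ^ b =
      v * t₀ ^ b * (b / a * (t / t₀) ^ a - ((t / t₀) ^ a) ^ (b / a)) := by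
  have hpos_a : 0 < t₀ ^ a := Real.rpow_pos_of_pos ht₀ a
  have hpos_b : 0 < t₀ ^ b := Real.rpow_pos_of_pos ht₀ b
  have hvb : v * t₀ ^ b = a * u * t₀ ^ a / b := by
    rw [show b = a + (b - a) by ring, Real.rpow_add ht₀, add_sub_cancel, hcrit]
    field_simp
  rw [← Real.rpow_mul (div_nonneg ht ht₀.le), mul_div_cancel₀ _ ha.ne',
    Real.div_rpow ht ht₀.le, Real.div_rpow ht ht₀.le, mul_sub]
  congr 1
  · rw [hvb]
    field_simp
  · field_simp

variable (ha : 0 < a) (hab : a < b) (hu : 0 < u) (hv : 0 < v)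
include ha hab hu hv

lemma exists_critical_point :
    ∃ t₀ > 0, t₀ ^ (b - a) = a * u / (b * v) ∧
      v * t₀ ^ b * (b / a - 1) = (b - a) / a * v * (a * u / (b * v)) ^ (b / (b - a)) := by
  have hc : 0 < a * u / (b * v) := by have := ha.trans hab; positivity
  refine ⟨_, Real.rpow_pos_of_pos hc (1 / (b - a)), ?_, ?_⟩
  · rw [← Real.rpow_mul hc.le, one_div_mul_cancel (sub_pos.2 hab).ne', Real.rpow_one]
  · rw [← Real.rpow_mul hc.le, one_div_mul_eq_div]
    field_simp

lemma mul_rpow_sub_mul_rpow_le {t : ℝ} (ht : 0 ≤ t) :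
    u * t ^ a - v * t ^ b ≤ (b - a) / a * v * (a * u / (b * v)) ^ (b / (b - a)) := by
  obtain ⟨t₀, ht₀, hcrit, hval⟩ := exists_critical_point ha hab hu hv
  rw [mul_rpow_sub_mul_rpow_eq_rescaled ha (ha.trans hab) hv ht ht₀ hcrit, ← hval]
  have : 0 < t₀ ^ b := Real.rpow_pos_of_pos ht₀ b
  refine mul_le_mul_of_nonneg_left ?_ (by positivity)
  exact mul_sub_rpow_le_sub_one ((one_le_div ha).2 hab.le)
    (Real.rpow_nonneg (div_nonneg ht ht₀.le) a)

lemma exists_mul_rpow_sub_mul_rpow_eq :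
    ∃ t₀ > 0,
      u * t₀ ^ a - v * t₀ ^ b = (b - a) / a * v * (a * u / (b * v)) ^ (b / (b - a)) := by
  obtain ⟨t₀, ht₀, hcrit, hval⟩ := exists_critical_point ha hab hu hv
  refine ⟨t₀, ht₀, ?_⟩
  rw [mul_rpow_sub_mul_rpow_eq_rescaled ha (ha.trans hab) hv ht₀.le ht₀ hcrit, ← hval,
    div_self ht₀.ne', Real.one_rpow, Real.one_rpow, mul_one]

end TwoPowers

lemma rpow_eq_sq_mul_rpow_sub_two {t p : ℝ} (ht : 0 ≤ t) (hp : p ≠ 0) :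
    t ^ p = t ^ 2 * t ^ (p - 2) := by
  have h := Real.rpow_add_natCast' ht (y := p - 2) (n := 2) (by simpa using hp)
  rw [Nat.cast_ofNat, sub_add_cancel] at h
  rw [h, mul_comm]

lemma eq_div_sub_two_of_eq_div_sub_two {N q : ℝ} (hq : q = 2 * N / (N - 2)) (h2 : 2 < q) :
    N = 2 * q / (q - 2) := by
  have hN : N - 2 ≠ 0 := by
    rintro hN
    rw [hN, div_zero] at hq
    linarith
  rw [eq_div_iff (by linarith), hq]
  field_simp
  ring

lemma double_power_eq_sq_mul {p q m : ℝ} (hp : 0 < p) (hq : 0 < q) (s : ℝ) :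
    |s| ^ p / p - |s| ^ q / q - m * s ^ 2 / 2 =
      s ^ 2 / 2 * (2 / p * |s| ^ (p - 2) - 2 / q * |s| ^ (q - 2) - m) := by
  rw [rpow_eq_sq_mul_rpow_sub_two (abs_nonneg s) hp.ne',
    rpow_eq_sq_mul_rpow_sub_two (abs_nonneg s) hq.ne', sq_abs]
  field_simp

lemma double_power_threshold_eq {N p q : ℝ} (hq : q = 2 * N / (N - 2)) (hp : 2 < p)
    (hpq : p < q) :
    (N - 2) * (q - p) / (N * (p - 2)) * (N * (p - 2) / (2 * p)) ^ ((q - 2) / (q - p)) =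
      (q - 2 - (p - 2)) / (p - 2) * (2 / q) *
        ((p - 2) * (2 / p) / ((q - 2) * (2 / q))) ^ ((q - 2) / (q - 2 - (p - 2))) := by
  have hq2 : 2 < q := hp.trans hpq
  have : q - 2 ≠ 0 := (sub_pos.2 hq2).ne'
  have : p - 2 ≠ 0 := (sub_pos.2 hp).ne'
  rw [eq_div_sub_two_of_eq_div_sub_two hq hq2, show q - 2 - (p - 2) = q - p by ring]
  congr 2
  · field_simp
    ring
  · field_simp

theorem double_power_positivity_iff_general
    (N : ℕ)
    (p twoStar m m₀ : ℝ)
    (h2s : twoStar = (2 * N : ℝ) / (N - 2))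
    (hp : 2 < p) (hp' : p < twoStar)
    (hm₀ : m₀ = (((N : ℝ) - 2) * (twoStar - p) / (N * (p - 2)))
        * ((N * (p - 2)) / (2 * p)) ^ ((twoStar - 2) / (twoStar - p)))
    (G : ℝ → ℝ)
    (hG : ∀ s : ℝ, G s = |s| ^ p / p - |s| ^ twoStar / twoStar - m * s ^ 2 / 2) :
    ((∃ ξ₀ : ℝ, 0 < ξ₀ ∧ 0 < G ξ₀) ↔ m < m₀) ∧
    (m₀ ≤ m → ∀ s : ℝ, G s ≤ 0) := by
  have hp0 : 0 < p := by linarith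
  have hq0 : 0 < twoStar := by linarith
  have ha : 0 < p - 2 := by linarith
  have hab : p - 2 < twoStar - 2 := by linarith
  have hu : 0 < 2 / p := by positivity
  have hv : 0 < 2 / twoStar := by positivity
  rw [double_power_threshold_eq h2s hp hp'] at hm₀
  have hGform (s : ℝ) := (hG s).trans (double_power_eq_sq_mul (m := m) hp0 hq0 s)
  have hbound (t : ℝ) (ht : 0 ≤ t) :
      2 / p * t ^ (p - 2) - 2 / twoStar * t ^ (twoStar - 2) ≤ m₀ :=
    hm₀ ▸ mul_rpow_sub_mul_rpow_le ha hab hu hv ht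
  obtain ⟨t₀, ht₀, hmax⟩ := exists_mul_rpow_sub_mul_rpow_eq ha hab hu hv
  rw [← hm₀] at hmax
  refine ⟨⟨?_, fun hm => ⟨t₀, ht₀, ?_⟩⟩, fun hm s => ?_⟩
  · rintro ⟨ξ, hξ, hGξ⟩
    rw [hGform] at hGξ
    have := (pos_iff_pos_of_mul_pos hGξ).1 (by positivity)
    linarith [hbound |ξ| (abs_nonneg ξ)]
  · rw [hGform, abs_of_pos ht₀, hmax]
    have := sub_pos.2 hm
    positivity
  · rw [hGform]
    exact mul_nonpos_of_nonneg_of_nonpos (by positivity)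
      (by linarith [hbound |s| (abs_nonneg s)])

/-- For the double-power nonlinearity `G(s) = |s|^p/p - |s|^{2*}/2* - m s²/2`
(with `2 < p < 2* = 2N/(N-2)`), hypothesis (g2) — the existence of `ξ₀ > 0`
with `G(ξ₀) > 0` — holds if and only if `m < m₀`, where
`m₀ = ((N-2)(2*-p)/(N(p-2))) (N(p-2)/(2p))^{(2*-2)/(2*-p)}`.
In particular, if `m ≥ m₀` then `G ≤ 0` everywhere. -/
theorem double_power_positivity_iff
    (N : ℕ) (hN : 3 ≤ N)
    (p twoStar m m₀ : ℝ)
    (h2s : twoStar = (2 * N : ℝ) / (N - 2))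
    (hp : 2 < p) (hp' : p < twoStar)
    (hm₀ : m₀ = (((N : ℝ) - 2) * (twoStar - p) / (N * (p - 2)))
        * ((N * (p - 2)) / (2 * p)) ^ ((twoStar - 2) / (twoStar - p)))
    (G : ℝ → ℝ)
    (hG : ∀ s : ℝ, G s = |s| ^ p / p - |s| ^ twoStar / twoStar - m * s ^ 2 / 2) :
    ((∃ ξ₀ : ℝ, 0 < ξ₀ ∧ 0 < G ξ₀) ↔ m < m₀) ∧
    (m₀ ≤ m → ∀ s : ℝ, G s ≤ 0) :=
  double_power_positivity_iff_general N p twoStar m m₀ h2s hp hp' hm₀ G hG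
end
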